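/- For all integers i, j, the two-variable residue satisfies Res₂(tⁱsʲ) = (C(i, −j−1) + (−1)^{i+j+1} C(j, −i−1)) · a^{i+j+1}, where C(n,k) denotes the (generalized) binomial coefficient, which is zero for k < 0. In particular Res₂(tⁱsʲ) = 0 whenever i + j ≤ −2, and Res₂(tⁱsʲ) ∈ ℂ[[a]] always. -/

import Mathlib

set_option maxHeartbeats 1000000
set_option synthInstance.maxHeartbeats 1000000


noncomputable section

/-- `Q = ℂ((a))`, the field of Laurent series in the variable `a`. -/
abbrev QQ : Type := LaurentSeries ℂ

/-- The variable `a ∈ Q`. -/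
def aa : QQ := HahnSeries.single 1 1

/-- `Q((t))` (also serving as `Q((s))`): Laurent series over `Q`. -/
abbrev FF : Type := LaurentSeries QQ

/-- The Laurent-series variable of `FF`. -/
def TT : FF := HahnSeries.single 1 1

/-- The two-variable residue of the monomial `tⁱsʲ`: the coefficient of `t⁻¹` in the
`t`-expansion `tⁱ(t−a)ʲ ∈ Q((t))` plus the coefficient of `s⁻¹` in the `s`-expansion
`(s+a)ⁱsʲ ∈ Q((s))`. -/
def res2 (i j : ℤ) : QQ :=
  (TT ^ i * (TT - HahnSeries.C aa) ^ j).coeff (-1) +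
  ((TT + HahnSeries.C aa) ^ i * TT ^ j).coeff (-1)

/-- The generalized binomial coefficient `C(i, k)` for `i, k : ℤ`, zero for `k < 0`. -/
def zbin (i k : ℤ) : ℤ := if 0 ≤ k then Ring.choose i k.toNat else 0

open HahnSeries

instance : RightDistribClass FF := ⟨fun a b c => by exact Distrib.right_distrib a b c⟩
instance : LeftDistribClass FF := ⟨fun a b c => by exact Distrib.left_distrib a b c⟩

lemma aa_ne : aa ≠ 0 := single_ne_zero one_ne_zero

/-- upper negation for `Ring.choose` over ℤ -/
lemma ring_choose_neg (q p : ℕ) :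
    Ring.choose (-(p : ℤ) - 1) q = (-1) ^ q * ((p + q).choose q : ℤ) := by
  induction q generalizing p with
  | zero => simp [Ring.choose_zero_right]
  | succ q ihq =>
    induction p with
    | zero =>
      have hp := Ring.choose_succ_succ (-1 : ℤ) q
      norm_num at hp ⊢
      have h0 := ihq 0
      norm_num at h0
      rw [show Ring.choose (-1:ℤ) (q+1) = -Ring.choose (-1:ℤ) q from by linarith, h0]
      ring
    | succ p ihp =>
      have hp := Ring.choose_succ_succ (-(p : ℤ) - 2) q
      have h1 : (-(p:ℤ) - 2) + 1 = -(p:ℤ) - 1 := by ring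
      rw [h1] at hp
      have h2 : Ring.choose (-(p:ℤ) - 2) q = (-1) ^ q * ((p + 1 + q).choose q : ℤ) := by
        rw [show -(p:ℤ) - 2 = -((p+1 : ℕ) : ℤ) - 1 from by push_cast; ring]
        exact ihq (p + 1)
      rw [show -((p+1 : ℕ) : ℤ) - 1 = -(p:ℤ) - 2 from by push_cast; ring]
      have : Ring.choose (-(p:ℤ) - 2) (q+1)
          = Ring.choose (-(p:ℤ)-1) (q+1) - Ring.choose (-(p:ℤ) - 2) q := by linarith
      rw [this, ihp, h2]
      have h4 : (p + 1 + (q + 1)).choose (q + 1) = (p + (q+1)).choose q + (p + (q+1)).choose (q+1) := by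
        rw [show p + 1 + (q + 1) = (p + (q+1)) + 1 from by ring, Nat.choose_succ_succ]
      rw [show p + 1 + q = p + (q + 1) from by ring, h4]
      push_cast
      ring


variable {c : QQ}

/-- `t + c` -/
def XX (c : QQ) : FF := TT + HahnSeries.C c

lemma XX_coeff (m : ℤ) : (XX c).coeff m = (if m = 1 then 1 else 0) + (if m = 0 then c else 0) := by
  rw [XX, HahnSeries.coeff_add, TT, HahnSeries.C_apply, HahnSeries.coeff_single,
    HahnSeries.coeff_single]
  split_ifs <;> rfl

lemma XX_ne (hc : c ≠ 0) : XX c ≠ 0 := by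
  apply ne_zero_of_coeff_ne_zero (g := 0)
  rw [XX_coeff]; simpa using hc

lemma XX_order (hc : c ≠ 0) : (XX c).order = 0 := by
  refine le_antisymm (order_le_of_coeff_ne_zero ?_) ?_
  · rw [XX_coeff]; simpa using hc
  · by_contra h
    push_neg at h
    have h2 := mt coeff_order_eq_zero.mp (XX_ne hc)
    rw [XX_coeff] at h2
    rw [if_neg (by omega), if_neg (by omega)] at h2
    simp at h2

lemma XX_zpow_ne (hc : c ≠ 0) (j : ℤ) : XX c ^ j ≠ 0 := zpow_ne_zero (G₀ := FF) j (XX_ne hc)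

lemma XX_zpow_order (hc : c ≠ 0) (j : ℤ) : (XX c ^ j).order = 0 := by
  cases j with
  | ofNat n => rw [Int.ofNat_eq_coe, zpow_natCast, order_pow, XX_order hc, smul_zero]
  | negSucc n =>
    rw [zpow_negSucc]
    have h1 : XX c ^ (n + 1) ≠ 0 := pow_ne_zero (M₀ := FF) _ (XX_ne hc)
    have h2 : (XX c ^ (n + 1))⁻¹ ≠ 0 := inv_ne_zero (G₀ := FF) h1
    have h3 : XX c ^ (n + 1) * (XX c ^ (n + 1))⁻¹ = 1 := mul_inv_cancel₀ (G₀ := FF) h1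
    have := order_mul h1 h2
    rw [h3, order_one] at this
    have h4 : (XX c ^ (n + 1)).order = 0 := by rw [order_pow, XX_order hc, smul_zero]
    omega

lemma XX_zpow_coeff_neg (hc : c ≠ 0) (j m : ℤ) (hm : m < 0) : (XX c ^ j).coeff m = 0 :=
  coeff_eq_zero_of_lt_order (by rw [XX_zpow_order hc]; exact hm)

lemma mul_XX_coeff (y : FF) (m : ℤ) :
    (XX c * y).coeff m = y.coeff (m - 1) + c * y.coeff m := by
  rw [XX, add_mul, HahnSeries.coeff_add]
  congr 1
  · rw [show m = (m - 1) + 1 from by ring]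
    rw [TT, coeff_single_mul_add, one_mul]
    ring_nf
  · rw [HahnSeries.C_apply, coeff_single_zero_mul]

lemma FF_mul_comm (a b : FF) : a * b = b * a := mul_comm a b

lemma FF_inv_eq_of_mul_eq_one_right {a b : FF} (h : a * b = 1) : a⁻¹ = b := by
  exact inv_eq_of_mul_eq_one_right (G := FF) h

lemma FF_zpow_succ (x : FF) (hx : x ≠ 0) (n : ℤ) : x ^ (n+1) = x ^ n * x :=
  zpow_add_one₀ (G₀ := FF) hx n

lemma XX_step_up (hc : c ≠ 0) (j : ℤ)
    (H : ∀ m : ℤ, (XX c ^ j).coeff m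
      = if 0 ≤ m then ((Ring.choose j m.toNat : ℤ) : QQ) * c ^ (j - m) else 0) (m : ℤ) :
    (XX c ^ (j+1)).coeff m
      = if 0 ≤ m then ((Ring.choose (j+1) m.toNat : ℤ) : QQ) * c ^ (j + 1 - m) else 0 := by
  have hx : XX c ^ (j+1) = XX c * XX c ^ j := by
    rw [FF_zpow_succ _ (XX_ne hc), FF_mul_comm]
  rw [hx, mul_XX_coeff, H, H]
  rcases lt_trichotomy m 0 with hm | hm | hm
  · rw [if_neg (by omega), if_neg (by omega), if_neg (by omega)]; ring
  · subst hm
    rw [if_neg (by omega), if_pos le_rfl, if_pos le_rfl]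
    have e : c ^ (j + 1 - 0) = c * c ^ (j - 0) := by
      rw [mul_comm, ← zpow_add_one₀ (G₀ := QQ) hc]; congr 1; ring
    have h1 : ((Ring.choose (j : ℤ) (Int.toNat 0) : ℤ) : QQ) = 1 := by
      simp [Ring.choose_zero_right]
    have h2 : ((Ring.choose (j+1 : ℤ) (Int.toNat 0) : ℤ) : QQ) = 1 := by
      simp [Ring.choose_zero_right]
    rw [e, h1, h2]
    ring
  · rw [if_pos (by omega), if_pos (by omega), if_pos (by omega)]
    have hm' : m.toNat = (m-1).toNat + 1 := by omega
    rw [hm']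
    have hp : ((Ring.choose (j+1) ((m-1).toNat+1) : ℤ) : QQ)
        = ((Ring.choose j ((m-1).toNat) : ℤ) : QQ)
          + ((Ring.choose j ((m-1).toNat+1) : ℤ) : QQ) := by
      exact_mod_cast congrArg (fun z : ℤ => (z : QQ)) (Ring.choose_succ_succ j ((m-1).toNat))
    have e1 : c ^ (j - (m-1)) = c ^ (j - m) * c := by
      rw [← zpow_add_one₀ (G₀ := QQ) hc]; congr 1; ring
    have e2 : c ^ (j + 1 - m) = c ^ (j - m) * c := by
      rw [← zpow_add_one₀ (G₀ := QQ) hc]; congr 1; ring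
    rw [e1, e2, hp]
    ring

lemma XX_step_down (hc : c ≠ 0) (j : ℤ)
    (H : ∀ m : ℤ, (XX c ^ j).coeff m
      = if 0 ≤ m then ((Ring.choose j m.toNat : ℤ) : QQ) * c ^ (j - m) else 0) (m : ℤ) :
    (XX c ^ (j-1)).coeff m
      = if 0 ≤ m then ((Ring.choose (j-1) m.toNat : ℤ) : QQ) * c ^ (j - 1 - m) else 0 := by
  have key : ∀ m : ℤ, c * (XX c ^ (j-1)).coeff m
      = (XX c ^ j).coeff m - (XX c ^ (j-1)).coeff (m-1) := by
    intro m
    have hx : XX c ^ j = XX c * XX c ^ (j-1) := by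
      rw [FF_mul_comm, ← FF_zpow_succ _ (XX_ne hc), sub_add_cancel]
    rw [hx, mul_XX_coeff]; ring
  have main : ∀ m : ℤ, 0 ≤ m → (XX c ^ (j-1)).coeff m
      = ((Ring.choose (j-1) m.toNat : ℤ) : QQ) * c ^ (j - 1 - m) := by
    refine Int.le_induction
      (motive := fun m _ => (XX c ^ (j-1)).coeff m
        = ((Ring.choose (j-1) m.toNat : ℤ) : QQ) * c ^ (j - 1 - m)) ?_ ?_
    · apply mul_left_cancel₀ hc
      rw [key 0, H 0, XX_zpow_coeff_neg hc _ _ (by norm_num), if_pos le_rfl]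
      have e : c ^ (j - 0) = c * c ^ (j - 1 - 0) := by
        rw [mul_comm, ← zpow_add_one₀ (G₀ := QQ) hc]; congr 1; ring
      have h1 : ((Ring.choose (j : ℤ) (Int.toNat 0) : ℤ) : QQ) = 1 := by
        simp [Ring.choose_zero_right]
      have h2 : ((Ring.choose (j-1 : ℤ) (Int.toNat 0) : ℤ) : QQ) = 1 := by
        simp [Ring.choose_zero_right]
      rw [e, h1, h2]
      ring
    · intro m hm ih
      apply mul_left_cancel₀ hc
      rw [key (m+1), H (m+1), add_sub_cancel_right, ih, if_pos (by omega)]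
      have ht : (m+1).toNat = m.toNat + 1 := by omega
      rw [ht]
      have hp : ((Ring.choose j (m.toNat+1) : ℤ) : QQ)
          = ((Ring.choose (j-1) m.toNat : ℤ) : QQ)
            + ((Ring.choose (j-1) (m.toNat+1) : ℤ) : QQ) := by
        have h0 := Ring.choose_succ_succ (j-1 : ℤ) m.toNat
        rw [sub_add_cancel] at h0
        exact_mod_cast congrArg (fun z : ℤ => (z : QQ)) h0
      have e1 : c ^ (j - (m+1)) = c ^ (j - 1 - m) := by congr 1; ring
      have e2 : c ^ (j - 1 - m) = c * c ^ (j - 1 - (m+1)) := by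
        rw [mul_comm, ← zpow_add_one₀ (G₀ := QQ) hc]; congr 1; ring
      rw [e1, hp, e2]
      ring
  rcases le_or_gt 0 m with hm | hm
  · rw [main m hm, if_pos hm]
  · rw [XX_zpow_coeff_neg hc _ _ hm, if_neg (by omega)]

lemma XX_zpow_coeff (hc : c ≠ 0) (j m : ℤ) :
    (XX c ^ j).coeff m
      = if 0 ≤ m then ((Ring.choose j m.toNat : ℤ) : QQ) * c ^ (j - m) else 0 := by
  induction j using Int.induction_on generalizing m with
  | zero =>
    rw [zpow_zero, HahnSeries.coeff_one]
    rcases lt_trichotomy m 0 with hm | hm | hm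
    · rw [if_neg (by omega), if_neg (by omega)]
    · subst hm
      rw [if_pos rfl, if_pos le_rfl, Int.toNat_zero, Ring.choose_zero_right]
      norm_num
    · rw [if_neg (by omega), if_pos (by omega),
        Ring.choose_zero_pos ℤ (by omega : 0 < m.toNat)]
      norm_num
  | succ i ih => exact XX_step_up hc i ih m
  | pred i ih => exact XX_step_down hc (-i) ih m

lemma FF_single_zero_one : (HahnSeries.single (0:ℤ) (1:QQ)) = 1 := by
  rw [← HahnSeries.C_apply, map_one]

lemma TT_zpow : ∀ i : ℤ, (TT : FF) ^ i = HahnSeries.single i 1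
  | Int.ofNat n => by
    rw [Int.ofNat_eq_coe, zpow_natCast TT n, TT, single_pow, one_pow, nsmul_eq_mul, mul_one]
  | Int.negSucc n => by
    have hmul : (HahnSeries.single ((n + 1 : ℕ) : ℤ) (1 : QQ))
        * HahnSeries.single (Int.negSucc n) (1 : QQ) = 1 := by
      rw [single_mul_single, one_mul, show ((n + 1 : ℕ) : ℤ) + Int.negSucc n = 0 from by rw [Int.negSucc_eq]; push_cast; ring]
      exact FF_single_zero_one
    rw [zpow_negSucc, TT, single_pow, one_pow, nsmul_eq_mul, mul_one]
    exact FF_inv_eq_of_mul_eq_one_right hmul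

lemma single_mul_coeff' (x : FF) (i m : ℤ) :
    (HahnSeries.single i (1:QQ) * x).coeff m = x.coeff (m - i) := by
  have h := coeff_single_mul_add (r := (1:QQ)) (x := x) (a := m - i) (b := i)
  rw [one_mul, sub_add_cancel] at h
  exact h

lemma mul_single_coeff' (x : FF) (j m : ℤ) :
    (x * HahnSeries.single j (1:QQ)).coeff m = x.coeff (m - j) := by
  have h := coeff_mul_single_add (r := (1:QQ)) (x := x) (a := m - j) (b := j)
  rw [mul_one, sub_add_cancel] at h
  exact h

lemma neg_aa_zpow (n : ℤ) : (-aa) ^ n = (-1 : QQ) ^ n * aa ^ n := by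
  have h : (-aa) = (-1 : QQ) * aa := by ring
  rw [h, mul_zpow]

lemma res2_eq (i j : ℤ) :
    res2 i j
      = ((zbin i (-j - 1) : QQ) + (-1 : QQ) ^ (i + j + 1) * (zbin j (-i - 1) : QQ))
        * aa ^ (i + j + 1) := by
  have hnaa : (-aa) ≠ 0 := neg_ne_zero.mpr aa_ne
  have h1 : TT - HahnSeries.C aa = XX (-aa) := by rw [XX, map_neg]; rfl
  have e1 : (TT ^ i * (TT - HahnSeries.C aa) ^ j).coeff (-1)
      = (zbin j (-i - 1) : QQ) * ((-1 : QQ) ^ (i + j + 1) * aa ^ (i + j + 1)) := by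
    rw [h1, TT_zpow i, single_mul_coeff', XX_zpow_coeff hnaa,
      show (-1 : ℤ) - i = -i - 1 from by ring,
      show j - (-i - 1) = i + j + 1 from by ring, neg_aa_zpow]
    simp only [zbin]
    rcases le_or_gt 0 (-i - 1) with h | h
    · rw [if_pos h, if_pos h]
    · rw [if_neg (not_le.mpr h), if_neg (not_le.mpr h)]
      simp
  have e2 : ((TT + HahnSeries.C aa) ^ i * TT ^ j).coeff (-1)
      = (zbin i (-j - 1) : QQ) * aa ^ (i + j + 1) := by
    rw [show TT + HahnSeries.C aa = XX aa from rfl, TT_zpow j, mul_single_coeff',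
      XX_zpow_coeff aa_ne,
      show (-1 : ℤ) - j = -j - 1 from by ring,
      show i - (-j - 1) = i + j + 1 from by ring]
    simp only [zbin]
    rcases le_or_gt 0 (-j - 1) with h | h
    · rw [if_pos h, if_pos h]
    · rw [if_neg (not_le.mpr h), if_neg (not_le.mpr h)]
      simp
  rw [res2, e1, e2]
  ring

lemma bracket_zero {i j : ℤ} (hn : i + j ≤ -2) :
    (zbin i (-j - 1) : QQ) + (-1 : QQ) ^ (i + j + 1) * (zbin j (-i - 1) : QQ) = 0 := by
  rcases le_or_gt 0 i with hi | hi
  · have hz1 : zbin j (-i - 1) = 0 := by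
      simp only [zbin, if_neg (by omega : ¬ (0 : ℤ) ≤ -i - 1)]
    have hz2 : zbin i (-j - 1) = 0 := by
      simp only [zbin, if_pos (by omega : (0 : ℤ) ≤ -j - 1)]
      rw [show i = ((i.toNat : ℕ) : ℤ) from by omega, Ring.choose_natCast]
      rw [Nat.choose_eq_zero_of_lt (by omega)]
      simp
    rw [hz1, hz2]
    push_cast
    ring
  rcases le_or_gt 0 j with hj | hj
  · have hz1 : zbin i (-j - 1) = 0 := by
      simp only [zbin, if_neg (by omega : ¬ (0 : ℤ) ≤ -j - 1)]
    have hz2 : zbin j (-i - 1) = 0 := by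
      simp only [zbin, if_pos (by omega : (0 : ℤ) ≤ -i - 1)]
      rw [show j = ((j.toNat : ℕ) : ℤ) from by omega, Ring.choose_natCast]
      rw [Nat.choose_eq_zero_of_lt (by omega)]
      simp
    rw [hz1, hz2]
    push_cast
    ring
  · set p := (-i - 1).toNat with hp
    set q := (-j - 1).toNat with hq
    have hip : i = -(p : ℤ) - 1 := by omega
    have hjq : j = -(q : ℤ) - 1 := by omega
    have hz1 : zbin i (-j - 1) = (-1) ^ q * ((p + q).choose q : ℤ) := by
      simp only [zbin, if_pos (by omega : (0 : ℤ) ≤ -j - 1)]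
      rw [hip, ← hq, ring_choose_neg]
    have hz2 : zbin j (-i - 1) = (-1) ^ p * ((p + q).choose q : ℤ) := by
      simp only [zbin, if_pos (by omega : (0 : ℤ) ≤ -i - 1)]
      rw [hjq, ← hp, ring_choose_neg]
      rw [show q + p = p + q from by ring, Nat.choose_symm_add]
    have hsgn : (-1 : QQ) ^ (i + j + 1) = (-1 : QQ) ^ (p + q + 1) := by
      rw [show i + j + 1 = -((p + q + 1 : ℕ) : ℤ) from by omega, zpow_neg, zpow_natCast]
      refine inv_eq_of_mul_eq_one_right ?_
      rw [← _root_.pow_add, show (p + q + 1) + (p + q + 1) = 2 * (p + q + 1) from by ring, pow_mul]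
      norm_num
    have hsign : (-1 : QQ) ^ (p + q + 1) * (-1 : QQ) ^ p = -(-1 : QQ) ^ q := by
      rw [← _root_.pow_add, show p + q + 1 + p = 2 * p + (q + 1) from by ring, _root_.pow_add, pow_mul,
        pow_succ]
      norm_num [pow_succ]
      ring
    rw [hz1, hz2, hsgn]
    push_cast
    linear_combination (((p + q).choose q : ℕ) : QQ) * hsign

/-- `Res₂(tⁱsʲ) = (C(i,−j−1) + (−1)^{i+j+1} C(j,−i−1))·a^{i+j+1}`;
in particular it vanishes for `i+j ≤ −2` and always lies in `ℂ[[a]]`. -/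
theorem stmt3 : ∀ i j : ℤ,
    res2 i j =
      ((zbin i (-j - 1) : QQ) + (-1 : QQ) ^ (i + j + 1) * (zbin j (-i - 1) : QQ))
        * aa ^ (i + j + 1) ∧
    (i + j ≤ -2 → res2 i j = 0) ∧
    (∃ p : PowerSeries ℂ, res2 i j = HahnSeries.ofPowerSeries ℤ ℂ p) := by
  intro i j
  have hzero : i + j ≤ -2 → res2 i j = 0 := by
    intro hn
    rw [res2_eq i j, bracket_zero hn, zero_mul]
  refine ⟨res2_eq i j, hzero, ?_⟩
  rcases le_or_gt 0 (i + j + 1) with hn | hn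
  · obtain ⟨k, hk⟩ : ∃ k : ℕ, i + j + 1 = (k : ℤ) := ⟨(i + j + 1).toNat, by omega⟩
    refine ⟨((zbin i (-j - 1) + (-1) ^ k * zbin j (-i - 1) : ℤ) : PowerSeries ℂ)
      * PowerSeries.X ^ k, ?_⟩
    rw [res2_eq i j, map_mul, map_intCast, map_pow, HahnSeries.ofPowerSeries_X, hk,
      zpow_natCast, zpow_natCast]
    rw [show aa = HahnSeries.single (1 : ℤ) (1 : ℂ) from rfl]
    push_cast
    ring
  · exact ⟨0, by rw [hzero (by omega), map_zero]⟩


end
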